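/- arXiv:2604.05728 — 5 statements merged into one kernel-verified Lean document; each statement's English description precedes it below -/
import Mathlib

section
/- Let G be a group, let H be a simple, complete, co-Hopfian group, and let ι : G → H be an injective homomorphism whose image is malnormal in H. If α : G → G is a non-trivial endomorphism and there exists an endomorphism β : H → H with ι ∘ α = β ∘ ι, then α is an inner automorphism of G. -/
/-- Let `G` be a group, `H` a simple, complete, co-Hopfian group, and `ι : G → H` an
injective homomorphism with malnormal image. If `α : G → G` is a non-trivial endomorphism
(not the trivial homomorphism) that extends along `ι` to an endomorphism `β : H → H`,
then `α` is an inner automorphism of `G`. -/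
theorem inner_of_extends {G : Type u} {H : Type v} [Group G] [Group H]
    (hsimple : IsSimpleGroup H)
    (hcenter : Subgroup.center H = ⊥)
    (hinner : ∀ φ : H ≃* H, ∃ h : H, ∀ x : H, φ x = h * x * h⁻¹)
    (hcoHopf : ∀ β : H →* H, Function.Injective β → Function.Surjective β)
    (ι : G →* H) (hι : Function.Injective ι)
    (hmal : ∀ h : H, h ∉ ι.range → ∀ g ∈ ι.range, h * g * h⁻¹ ∈ ι.range → g = 1)
    (α : G →* G) (hα : α ≠ 1)
    (hext : ∃ β : H →* H, ∀ x : G, ι (α x) = β (ι x)) :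
    ∃ g : G, ∀ x : G, α x = g * x * g⁻¹ := by
  obtain ⟨β, hβ⟩ := hext
  -- ker β is not ⊤
  have hker : β.ker ≠ ⊤ := by
    intro htop
    apply hα
    ext x
    have hmem : ι x ∈ β.ker := htop ▸ Subgroup.mem_top (ι x)
    have h1 : ι (α x) = ι 1 := by
      rw [hβ x, MonoidHom.mem_ker.mp hmem, map_one]
    simpa using hι h1
  have hbot : β.ker = ⊥ :=
    (Subgroup.Normal.eq_bot_or_eq_top inferInstance).resolve_right hker
  have hinj : Function.Injective β := (MonoidHom.ker_eq_bot_iff β).mp hbot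
  have hsurj := hcoHopf β hinj
  obtain ⟨h, hh⟩ := hinner (MulEquiv.ofBijective β ⟨hinj, hsurj⟩)
  have key : ∀ x : G, ι (α x) = h * ι x * h⁻¹ := fun x => (hβ x).trans (hh (ι x))
  by_cases hr : h ∈ ι.range
  · obtain ⟨g, hg⟩ := hr
    refine ⟨g, fun x => hι ?_⟩
    rw [key x, map_mul, map_mul, map_inv, hg]
  · exfalso
    apply hα
    ext x
    have h1 : ι x = 1 := hmal h hr (ι x) ⟨x, rfl⟩ (by rw [← key x]; exact ⟨α x, rfl⟩)
    have hx : x = 1 := hι (by simpa using h1)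
    simp [hx]
end

section
/- Let G and H be groups. If there exist an injective group homomorphism H × ℤ → G and an injective group homomorphism G → H, then H is not co-Hopfian, i.e. H admits an injective endomorphism that is not surjective. -/
/-- If there are injective group homomorphisms `H × ℤ → G` and `G → H`, then `H` is not
co-Hopfian: it admits an injective endomorphism that is not surjective. -/
theorem not_coHopfian_of_embeddings {G : Type u} {H : Type v} [Group G] [Group H]
    (f : H × Multiplicative ℤ →* G) (hf : Function.Injective f)
    (g : G →* H) (hg : Function.Injective g) :
    ∃ β : H →* H, Function.Injective β ∧ ¬ Function.Surjective β := by
  refine ⟨g.comp (f.comp (MonoidHom.inl H (Multiplicative ℤ))), ?_, ?_⟩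
  · exact hg.comp (hf.comp fun a b h => by simpa using congrArg Prod.fst h)
  · intro hs
    obtain ⟨h, hh⟩ := hs (g (f (1, Multiplicative.ofAdd 1)))
    have := hf (hg hh)
    rw [MonoidHom.inl_apply, Prod.mk.injEq] at this
    exact absurd (congrArg Multiplicative.toAdd this.2.symm) (by simp)
end

section
/- Let G be a finitely presented group such that every finitely presented group embeds into G, and let H be a finitely presented co-Hopfian group. Then G does not embed into H. -/
/-! `H × ℤ` is finitely presented, so it embeds into `G` and hence into `H`. Restricted to
`H × 1` this is an injective endomorphism of `H` that misses the image of `(1, t)` for a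
generator `t` of `ℤ`, contradicting co-Hopficity. A direct product `G × H` of finitely presented
groups is finitely presented because it is the free product `G ∗ H` modulo the commutators of
the generators of `G` with those of `H`. -/

/-- A group is finitely presented if it is isomorphic to the quotient of a free group on
finitely many generators by the normal closure of finitely many relators. -/
def IsFinitelyPresented (G : Type u) [Group G] : Prop :=
  ∃ (n : ℕ) (R : Finset (FreeGroup (Fin n))),
    Nonempty (G ≃* FreeGroup (Fin n) ⧸ Subgroup.normalClosure (R : Set (FreeGroup (Fin n))))

open Subgroup
open scoped commutatorElement

theorem isFinitelyPresented_iff_group_isFinitelyPresented {G : Type u} [Group G] :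
    IsFinitelyPresented G ↔ Group.IsFinitelyPresented G := by
  constructor
  · rintro ⟨n, R, ⟨e⟩⟩
    have := Group.IsFinitelyPresented.quotient _ ⟨_, R.finite_toSet, rfl⟩
    exact Group.IsFinitelyPresented.equiv e.symm
  · rintro ⟨n, φ, hφ, s, hs, hsφ⟩
    exact ⟨n, hs.toFinset, ⟨(QuotientGroup.quotientKerEquivOfSurjective φ hφ).symm.trans
      (QuotientGroup.quotientMulEquivOfEq (by rw [hs.coe_toFinset, hsφ]))⟩⟩

theorem MonoidHom.commute_of_commute_of_closure_eq_top {G H P : Type*} [Group G] [Group H]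
    [Group P] {S : Set G} {T : Set H} (hS : closure S = ⊤) (hT : closure T = ⊤)
    (f : G →* P) (g : H →* P) (h : ∀ a ∈ S, ∀ b ∈ T, Commute (f a) (g b)) (a : G) (b : H) :
    Commute (f a) (g b) := by
  have hS' : S ⊆ (centralizer (Set.range g)).comap f := by
    intro a ha
    have hT' : T ⊆ (centralizer {f a}).comap g := fun b hb =>
      mem_centralizer_singleton_iff.mpr (h a ha b hb).eq.symm
    rw [SetLike.mem_coe, mem_comap, mem_centralizer_iff]
    rintro _ ⟨b, rfl⟩
    exact mem_centralizer_singleton_iff.mp ((closure_le _).mpr hT' (hT ▸ mem_top b))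
  exact (mem_centralizer_iff.mp ((closure_le _).mpr hS' (hS ▸ mem_top a)) (g b) ⟨b, rfl⟩).symm

open Monoid.Coprod in
theorem Monoid.Coprod.ker_toProd {G H : Type*} [Group G] [Group H] {S : Set G} {T : Set H}
    (hS : closure S = ⊤) (hT : closure T = ⊤) :
    (toProd : G ∗ H →* G × H).ker =
      normalClosure (Set.image2 (fun a b => ⁅(inl a : G ∗ H), (inr b : G ∗ H)⁆) S T) := by
  set N := normalClosure (Set.image2 (fun a b => ⁅(inl a : G ∗ H), (inr b : G ∗ H)⁆) S T)
  refine le_antisymm ?_ (normalClosure_le_normal ?_)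
  · let q := QuotientGroup.mk' N
    have hcomm := (q.comp inl).commute_of_commute_of_closure_eq_top hS hT (q.comp inr)
      fun a ha b hb => by
        rw [← commutatorElement_eq_one_iff_commute]
        simp only [MonoidHom.comp_apply, ← map_commutatorElement]
        exact (QuotientGroup.eq_one_iff _).mpr (subset_normalClosure ⟨a, ha, b, hb, rfl⟩)
    -- modulo `N` the two factors commute, so the quotient map factors through `toProd`
    have hq : (MonoidHom.noncommCoprod _ _ hcomm).comp toProd = q :=
      hom_ext (by ext; simp) (by ext; simp)
    intro x hx
    rw [← QuotientGroup.eq_one_iff (N := N)]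
    change q x = 1
    rw [← hq, MonoidHom.comp_apply, hx, map_one]
  · rintro _ ⟨a, -, b, -, rfl⟩
    simp [commutatorElement_def]

instance Group.IsFinitelyPresented.fg {G : Type*} [Group G] [h : Group.IsFinitelyPresented G] :
    Group.FG G :=
  let ⟨_, _, hφ, _⟩ := h
  Group.fg_of_surjective hφ

instance Group.IsFinitelyPresented.prod {G H : Type*} [Group G] [Group H]
    [Group.IsFinitelyPresented G] [Group.IsFinitelyPresented H] :
    Group.IsFinitelyPresented (G × H) := by
  obtain ⟨S, hS, hSfin⟩ := Group.fg_iff.mp (inferInstance : Group.FG G)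
  obtain ⟨T, hT, hTfin⟩ := Group.fg_iff.mp (inferInstance : Group.FG H)
  exact of_surjective _ Monoid.Coprod.toProd_surjective
    ⟨_, hSfin.image2 _ hTfin, (Monoid.Coprod.ker_toProd hS hT).symm⟩

theorem not_injective_prod_of_coHopfian {H K : Type*} [Group H] [Group K] [Nontrivial K]
    (hcoHopf : ∀ β : H →* H, Function.Injective β → Function.Surjective β)
    (φ : H × K →* H) : ¬ Function.Injective φ := by
  intro hφ
  obtain ⟨k, hk⟩ := exists_ne (1 : K)
  obtain ⟨h, hh⟩ := hcoHopf (φ.comp (MonoidHom.inl H K))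
    (hφ.comp (Prod.mk_left_injective 1)) (φ (1, k))
  exact hk (congrArg Prod.snd (hφ hh)).symm

theorem universal_fp_not_embed_coHopfian_general (G H : Type u) [Group G] [Group H]
    (huniv : ∀ (K : Type u) [Group K], IsFinitelyPresented K →
      ∃ f : K →* G, Function.Injective f)
    (hH : IsFinitelyPresented H)
    (hcoHopf : ∀ β : H →* H, Function.Injective β → Function.Surjective β) :
    ¬ ∃ f : G →* H, Function.Injective f := by
  rintro ⟨f, hf⟩
  have : Group.IsFinitelyPresented H := isFinitelyPresented_iff_group_isFinitelyPresented.mp hH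
  obtain ⟨g, hg⟩ := huniv (H × Multiplicative ℤ)
    (isFinitelyPresented_iff_group_isFinitelyPresented.mpr inferInstance)
  exact not_injective_prod_of_coHopfian hcoHopf (f.comp g) (hf.comp hg)

/-- If `G` is a finitely presented group containing a copy of every finitely presented
group, and `H` is a finitely presented co-Hopfian group, then `G` does not embed
into `H`. -/
theorem universal_fp_not_embed_coHopfian (G H : Type u) [Group G] [Group H]
    (hG : IsFinitelyPresented G)
    (huniv : ∀ (K : Type u) [Group K], IsFinitelyPresented K →
      ∃ f : K →* G, Function.Injective f)
    (hH : IsFinitelyPresented H)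
    (hcoHopf : ∀ β : H →* H, Function.Injective β → Function.Surjective β) :
    ¬ ∃ f : G →* H, Function.Injective f :=
  universal_fp_not_embed_coHopfian_general G H huniv hH hcoHopf
end

section
/- Let κ be an infinite cardinal and let G be a group of cardinality κ such that every group of cardinality κ embeds into G. Then G does not embed into any co-Hopfian group of cardinality κ. -/
open Cardinal

/-!
Apply universality to `H × H`, which has cardinality `κ` because `κ` is infinite. Composing
gives an embedding `φ : H × H → H`. Its restriction to `H × 1` is an injective endomorphism of
`H`, hence onto by co-Hopficity, so every `φ (1, k)` is already some `φ (h, 1)`, which forces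
`k = 1`. Thus `H` would be trivial, contradicting `#H = κ ≥ ℵ₀`.
-/

def IsCoHopfian (H : Type*) [Group H] : Prop :=
  ∀ β : H →* H, Function.Injective β → Function.Surjective β

theorem IsCoHopfian.subsingleton_of_injective_prod {H K : Type*} [Group H] [Group K]
    (hH : IsCoHopfian H) {φ : H × K →* H} (hφ : Function.Injective φ) : Subsingleton K := by
  suffices h1 : ∀ k : K, k = 1 from ⟨fun a b => by rw [h1 a, h1 b]⟩
  intro k
  obtain ⟨h, hh⟩ :=
    hH (φ.comp (MonoidHom.inl H K)) (hφ.comp (Prod.mk_left_injective 1)) (φ (1, k))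
  exact (congrArg Prod.snd (hφ hh)).symm

theorem universal_not_embed_coHopfian_general (κ : Cardinal.{u}) (hκ : ℵ₀ ≤ κ)
    (G : Type u) [Group G]
    (huniv : ∀ (K : Type u) [Group K], #K = κ → ∃ f : K →* G, Function.Injective f)
    (H : Type u) [Group H] (hH : #H = κ)
    (hcoHopf : ∀ β : H →* H, Function.Injective β → Function.Surjective β) :
    ¬ ∃ f : G →* H, Function.Injective f := by
  rintro ⟨f, hf⟩
  have hHH : #(H × H) = κ := by rw [mk_prod, lift_id, hH, mul_eq_self hκ]
  obtain ⟨g, hg⟩ := huniv (H × H) hHH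
  have : Subsingleton H :=
    IsCoHopfian.subsingleton_of_injective_prod hcoHopf (φ := f.comp g) (hf.comp hg)
  have : Infinite H := infinite_iff.mpr (hH ▸ hκ)
  exact not_finite H

/-- Let `κ` be an infinite cardinal and `G` a group of cardinality `κ` containing a copy
of every group of cardinality `κ`. Then `G` does not embed into any co-Hopfian group of
cardinality `κ`. -/
theorem universal_not_embed_coHopfian (κ : Cardinal.{u}) (hκ : ℵ₀ ≤ κ)
    (G : Type u) [Group G] (hG : #G = κ)
    (huniv : ∀ (K : Type u) [Group K], #K = κ → ∃ f : K →* G, Function.Injective f)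
    (H : Type u) [Group H] (hH : #H = κ)
    (hcoHopf : ∀ β : H →* H, Function.Injective β → Function.Surjective β) :
    ¬ ∃ f : G →* H, Function.Injective f :=
  universal_not_embed_coHopfian_general κ hκ G huniv H hH hcoHopf
end

section
/- Let M₁ and M₂ be magmas (sets with a binary operation), each possessing a two-sided identity element, and suppose the cardinality of M₁ is at most the cardinality of M₂. Let M be the set obtained from the disjoint union of M₁ and M₂ by identifying their identity elements. Then there exists a binary operation on M extending the operations of M₁ and M₂ such that for every x ∈ M lying outside the copy of M₂, the submagma of M generated by M₂ together with x is all of M (i.e. the copy of M₂ is a maximal submagma of M). -/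
open Cardinal

section Aux

attribute [local instance] Classical.propDecidable

variable {M₁ M₂ : Type u} [MulOneClass M₁] [MulOneClass M₂]

/-- map sending nonidentity elements of `M₁` to nonidentity elements of `M₂`. -/
noncomputable def glueF (g : M₁ ↪ M₂) (a : {a : M₁ // a ≠ 1}) : M₂ :=
  if g a.1 = 1 then g 1 else g a.1

lemma glueF_ne_one (g : M₁ ↪ M₂) (a : {a : M₁ // a ≠ 1}) : glueF g a ≠ 1 := by
  unfold glueF
  split_ifs with h
  · intro h1
    exact a.2 (g.injective (h.trans h1.symm))
  · exact h

lemma glueF_inj (g : M₁ ↪ M₂) : Function.Injective (glueF (M₁ := M₁) g) := by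
  intro a b hab
  unfold glueF at hab
  split_ifs at hab with h1 h2 h2
  · exact Subtype.ext (g.injective (h1.trans h2.symm))
  · exact absurd (g.injective hab).symm b.2
  · exact absurd (g.injective hab) a.2
  · exact Subtype.ext (g.injective hab)

/-- embedding of `M₁` into the glued type. -/
noncomputable def glueI₁ (a : M₁) : ({a : M₁ // a ≠ 1} ⊕ M₂) :=
  if h : a = 1 then .inr 1 else .inl ⟨a, h⟩

/-- the glued multiplication. -/
noncomputable def glueMul (g : M₁ ↪ M₂) :
    ({a : M₁ // a ≠ 1} ⊕ M₂) → ({a : M₁ // a ≠ 1} ⊕ M₂) → ({a : M₁ // a ≠ 1} ⊕ M₂)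
  | .inl a, .inl b => glueI₁ (a.1 * b.1)
  | .inr x, .inr y => .inr (x * y)
  | .inr _, .inl a => .inl a
  | .inl a, .inr x =>
      if x = 1 then .inl a
      else if h : ∃ b : {a : M₁ // a ≠ 1}, glueF g b = x then .inl h.choose else .inr x

end Aux

/-- Let `M₁`, `M₂` be magmas with two-sided identities, with `|M₁| ≤ |M₂|`. On the set
`M` obtained from the disjoint union of `M₁` and `M₂` by identifying the two identity
elements, there is a binary operation extending those of `M₁` and `M₂` such that the
copy of `M₂` is a maximal submagma: for every `x ∈ M` outside the copy of `M₂`, the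
submagma generated by the copy of `M₂` together with `x` is all of `M`. -/
theorem magma_maximal_glueing (M₁ : Type u) (M₂ : Type u) [MulOneClass M₁] [MulOneClass M₂]
    (hcard : #M₁ ≤ #M₂) :
    ∃ (M : Type u) (_ : Mul M) (i₁ : M₁ → M) (i₂ : M₂ → M),
      Function.Injective i₁ ∧ Function.Injective i₂ ∧
      i₁ 1 = i₂ 1 ∧
      Set.range i₁ ∪ Set.range i₂ = Set.univ ∧
      Set.range i₁ ∩ Set.range i₂ = {i₁ 1} ∧
      (∀ x y : M₁, i₁ (x * y) = i₁ x * i₁ y) ∧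
      (∀ x y : M₂, i₂ (x * y) = i₂ x * i₂ y) ∧
      (∀ x : M, x ∉ Set.range i₂ →
        Subsemigroup.closure (Set.range i₂ ∪ {x}) = ⊤) := by
  classical
  obtain ⟨g⟩ := Cardinal.le_def _ _ |>.mp hcard
  letI inst : Mul ({a : M₁ // a ≠ 1} ⊕ M₂) := ⟨glueMul g⟩
  refine ⟨({a : M₁ // a ≠ 1} ⊕ M₂), inst, glueI₁, Sum.inr,
    ?_, ?_, ?_, ?_, ?_, ?_, ?_, ?_⟩
  · -- injectivity of i₁
    intro a b hab
    unfold glueI₁ at hab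
    by_cases h1 : a = 1 <;> by_cases h2 : b = 1
    · exact h1.trans h2.symm
    · rw [dif_pos h1, dif_neg h2] at hab; exact (Sum.inr_ne_inl hab).elim
    · rw [dif_neg h1, dif_pos h2] at hab; exact (Sum.inl_ne_inr hab).elim
    · rw [dif_neg h1, dif_neg h2] at hab
      exact congrArg Subtype.val (Sum.inl.inj hab)
  · exact fun a b h => Sum.inr.inj h
  · simp [glueI₁]
  · -- union = univ
    ext x
    simp only [Set.mem_union, Set.mem_range, Set.mem_univ, iff_true]
    cases x with
    | inl a => exact Or.inl ⟨a.1, by simp [glueI₁, a.2]⟩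
    | inr m => exact Or.inr ⟨m, rfl⟩
  · -- intersection
    ext x
    simp only [Set.mem_inter_iff, Set.mem_range, Set.mem_singleton_iff]
    constructor
    · rintro ⟨⟨a, ha⟩, ⟨m, hm⟩⟩
      subst hm
      unfold glueI₁ at ha ⊢
      by_cases h : a = 1
      · rw [dif_pos h] at ha
        rw [dif_pos rfl, Sum.inr.inj ha]
      · rw [dif_neg h] at ha
        exact (Sum.inl_ne_inr ha).elim
    · rintro rfl
      exact ⟨⟨1, by simp [glueI₁]⟩, ⟨1, by simp [glueI₁]⟩⟩
  · -- i₁ hom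
    intro x y
    show glueI₁ (x * y) = glueMul g (glueI₁ x) (glueI₁ y)
    by_cases hx : x = 1 <;> by_cases hy : y = 1
    · subst hx; subst hy
      simp [glueI₁, glueMul]
    · subst hx
      simp only [one_mul, glueI₁, dif_pos rfl, dif_neg hy]
      rfl
    · subst hy
      simp only [mul_one, glueI₁, dif_pos rfl, dif_neg hx]
      simp [glueMul]
    · simp only [glueI₁, dif_neg hx, dif_neg hy]
      rfl
  · intro x y; rfl
  · -- maximality
    intro x hx
    obtain ⟨a, rfl⟩ : ∃ a : {a : M₁ // a ≠ 1}, x = Sum.inl a := by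
      cases x with
      | inl a => exact ⟨a, rfl⟩
      | inr m => exact (hx ⟨m, rfl⟩).elim
    rw [eq_top_iff]
    intro y _
    cases y with
    | inr m =>
      exact Subsemigroup.subset_closure (Or.inl ⟨m, rfl⟩)
    | inl b =>
      have h1 : Sum.inl a ∈ Subsemigroup.closure
          (Set.range (Sum.inr : M₂ → _) ∪ {Sum.inl a}) :=
        Subsemigroup.subset_closure (Or.inr rfl)
      have h2 : (Sum.inr (glueF g b) : {a : M₁ // a ≠ 1} ⊕ M₂) ∈ Subsemigroup.closure
          (Set.range (Sum.inr : M₂ → _) ∪ {Sum.inl a}) :=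
        Subsemigroup.subset_closure (Or.inl ⟨_, rfl⟩)
      have key : glueMul g (Sum.inl a) (Sum.inr (glueF g b)) = Sum.inl b := by
        have hne : glueF g b ≠ 1 := glueF_ne_one g b
        have hex : ∃ b' : {a : M₁ // a ≠ 1}, glueF g b' = glueF g b := ⟨b, rfl⟩
        simp only [glueMul, if_neg hne, dif_pos hex]
        exact congrArg Sum.inl (glueF_inj g hex.choose_spec)
      have := Subsemigroup.mul_mem _ h1 h2
      rwa [show (Sum.inl a : {a : M₁ // a ≠ 1} ⊕ M₂) * Sum.inr (glueF g b)
            = glueMul g (Sum.inl a) (Sum.inr (glueF g b)) from rfl, key] at this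
end
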